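/- arXiv:2310.01305 — 3 statements merged into one kernel-verified Lean document; each statement's English description precedes it below -/
import Mathlib

section
/- Let n = 2^k · p^2 be a 2-near perfect number with omitted divisors d₁ and d₂, where p is an odd prime and k is a positive integer. Then d₁ + d₂ = −p^2 + (2^(k+1) − 1)·p + (2^(k+1) − 1), and d₁ and d₂ have opposite parity (one is even and one is odd). -/
open ArithmeticFunction ArithmeticFunction.sigma

/-!
Since `σ` is multiplicative, `σ (2 ^ k * p ^ 2) = (2 ^ (k + 1) - 1) * (1 + p + p ^ 2)`, and the
formula for `d₁ + d₂` is this identity rearranged. Both factors are odd, so `σ n` is odd while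
`2 * n` is even; hence `d₁ + d₂` is odd.
-/

lemma sigma_one_two_pow (k : ℕ) : σ 1 (2 ^ k) = mersenne (k + 1) := by
  rw [sigma_one_apply_prime_pow Nat.prime_two, mersenne, Nat.geomSum_eq le_rfl, Nat.div_one]

lemma sigma_one_two_pow_mul_of_odd {m : ℕ} (hm : Odd m) (k : ℕ) :
    σ 1 (2 ^ k * m) = mersenne (k + 1) * σ 1 m := by
  rw [isMultiplicative_sigma.map_mul_of_coprime ((Nat.coprime_two_left.mpr hm).pow_left k),
    sigma_one_two_pow]

lemma sigma_one_prime_sq {p : ℕ} (hp : p.Prime) : σ 1 (p ^ 2) = 1 + p + p ^ 2 := by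
  simp [sigma_one_apply_prime_pow hp, Finset.sum_range_succ]

lemma odd_one_add_add_sq (p : ℕ) : Odd (1 + p + p ^ 2) := by
  simp [parity_simps]

lemma Nat.even_and_odd_or_odd_and_even_of_odd_add {a b : ℕ} (h : Odd (a + b)) :
    (Even a ∧ Odd b) ∨ (Odd a ∧ Even b) := by
  rcases Nat.even_or_odd a with ha | ha
  · exact .inl ⟨ha, Nat.odd_add'.mp h |>.mpr ha⟩
  · exact .inr ⟨ha, Nat.odd_add.mp h |>.mp ha⟩

theorem omitted_divisors_sum_and_parity_general
    (n k p d₁ d₂ : ℕ) (hp : p.Prime) (hpodd : Odd p)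
    (hn : n = 2 ^ k * p ^ 2)
    (hσ : σ 1 n = 2 * n + d₁ + d₂) :
    (d₁ : ℤ) + d₂ = -(p : ℤ) ^ 2 + (2 ^ (k + 1) - 1) * p + (2 ^ (k + 1) - 1) ∧
      ((Even d₁ ∧ Odd d₂) ∨ (Odd d₁ ∧ Even d₂)) := by
  have hσn : σ 1 n = mersenne (k + 1) * (1 + p + p ^ 2) := by
    rw [hn, sigma_one_two_pow_mul_of_odd (hpodd.pow (n := 2)), sigma_one_prime_sq hp]
  constructor
  · have hmersenne : (mersenne (k + 1) : ℤ) = 2 ^ (k + 1) - 1 := by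
      rw [eq_sub_iff_add_eq]; exact_mod_cast succ_mersenne (k + 1)
    have hσZ := congrArg (Nat.cast : ℕ → ℤ) (hσn.symm.trans hσ)
    push_cast [hmersenne, hn] at hσZ
    linear_combination -hσZ
  · apply Nat.even_and_odd_or_odd_and_even_of_odd_add
    have hodd : Odd (σ 1 n) := by
      rw [hσn]
      exact (mersenne_odd.mpr k.succ_ne_zero).mul (odd_one_add_add_sq p)
    rw [hσ, add_assoc] at hodd
    exact (Nat.odd_add'.mp hodd).mpr (even_two_mul n)

theorem omitted_divisors_sum_and_parity
    (n k p d₁ d₂ : ℕ) (hk : 0 < k) (hp : p.Prime) (hpodd : Odd p)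
    (hn : n = 2 ^ k * p ^ 2)
    (hd₁ : d₁ ∣ n) (hd₂ : d₂ ∣ n) (hd₁pos : 0 < d₁) (hd₂pos : 0 < d₂)
    (hne : d₁ ≠ d₂) (hσ : σ 1 n = 2 * n + d₁ + d₂) :
    (d₁ : ℤ) + d₂ = -(p : ℤ) ^ 2 + (2 ^ (k + 1) - 1) * p + (2 ^ (k + 1) - 1) ∧
      ((Even d₁ ∧ Odd d₂) ∨ (Odd d₁ ∧ Even d₂)) :=
  omitted_divisors_sum_and_parity_general n k p d₁ d₂ hp hpodd hn hσ
end

section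
/- Let n = 2^k · p^2 be a 2-near perfect number (p an odd prime, k a positive integer) whose omitted divisors have the form d₁ = p^j with j ∈ {1, 2} and d₂ = 2^b · p^g with g ∈ {1, 2} and 1 ≤ b ≤ k. Then n = 200, with omitted divisors 25 and 40. -/
open ArithmeticFunction
open scoped ArithmeticFunction.sigma

/-!
Since `σ (2 ^ k * p ^ 2) = (2 ^ (k + 1) - 1) (1 + p + p ^ 2)`, the defining equation becomes
`2 ^ (k + 1) (1 + p) = 1 + p + p ^ 2 + d₁ + d₂`. Reducing modulo `p` gives
`2 ^ (k + 1) = 1 + p m`, and the equation becomes linear in `m`. When `g = 1`, eliminating `2 ^ b`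
against `2 ^ (b + 1) ≤ 2 ^ (k + 1)` bounds `m`: this is impossible for `j = 1` and forces `m = 3`,
hence `k = b = 3` and `p = 5`, for `j = 2`. For `j = 1, g = 2` one gets `p + 1 = 2 ^ t` and
`2 ^ (k + 1) = 2 ^ t + 2 ^ s p ^ 2`, which has an odd factor greater than `1`. For `j = g = 2`,
`m = p c` and `2 ^ (b + 1)` would have to divide `2 p - 1 + c`, which lies strictly between `0`
and `2 ^ (b + 2)` but differs from `2 ^ (b + 1)`.
-/

lemma sigma_one_two_pow_add_one (k : ℕ) : σ 1 (2 ^ k) + 1 = 2 ^ (k + 1) := by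
  rw [sigma_one_apply_prime_pow Nat.prime_two]
  induction k with
  | zero => simp
  | succ k ih => rw [Finset.sum_range_succ, pow_succ 2 (k + 1)]; omega

lemma sigma_one_two_pow_mul_add_sigma_one {m : ℕ} (k : ℕ) (hm : Odd m) :
    σ 1 (2 ^ k * m) + σ 1 m = 2 ^ (k + 1) * σ 1 m := by
  rw [isMultiplicative_sigma.map_mul_of_coprime ((Nat.coprime_two_left.mpr hm).pow_left k),
    ← sigma_one_two_pow_add_one, add_mul, one_mul]

lemma two_pow_succ_mul_one_add_eq_of_sigma_eq {k p d₁ d₂ : ℕ} (hp : p.Prime) (hpodd : Odd p)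
    (h : σ 1 (2 ^ k * p ^ 2) = 2 * (2 ^ k * p ^ 2) + d₁ + d₂) :
    2 ^ (k + 1) * (1 + p) = 1 + p + p ^ 2 + d₁ + d₂ := by
  have hsum := sigma_one_two_pow_mul_add_sigma_one k (hpodd.pow (n := 2))
  rw [h, sigma_one_apply_prime_pow hp] at hsum
  simp only [Finset.sum_range_succ, Finset.sum_range_zero, pow_succ 2 k] at hsum
  rw [pow_succ]
  linarith

lemma exists_eq_one_add_mul_of_mul_one_add_eq {T p R : ℕ} (hp : 0 < p)
    (h : T * (1 + p) = 1 + p * R) : ∃ m, T = 1 + p * m ∧ m * (1 + p) + 1 = R := by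
  have hT : T ≠ 0 := by rintro rfl; omega
  obtain ⟨m, rfl⟩ : ∃ m, R = T + m := by
    refine Nat.exists_eq_add_of_le (not_lt.mp fun hRT => ?_)
    nlinarith
  exact ⟨m, by nlinarith, by nlinarith⟩

lemma eq_one_of_two_pow_mul_eq_two_pow {s N o : ℕ} (ho : Odd o) (h : 2 ^ s * o = 2 ^ N) :
    o = 1 :=
  ((Nat.coprime_two_right.mpr ho).pow_right N).eq_one_of_dvd (Dvd.intro_left _ h)

lemma two_pow_add_two_pow_mul_sq_ne_two_pow {p : ℕ} (hpodd : Odd p) (hp1 : 1 < p) (t s N : ℕ) :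
    2 ^ t + 2 ^ s * p ^ 2 ≠ 2 ^ N := by
  intro h
  have hp2 : 1 < p ^ 2 := Nat.one_lt_pow two_ne_zero hp1
  have hd (d : ℕ) : Even (2 ^ (d + 1)) := Nat.even_pow.mpr ⟨even_two, d.succ_ne_zero⟩
  rcases lt_trichotomy t s with hts | rfl | hst
  · obtain ⟨d, rfl⟩ := Nat.exists_eq_add_of_lt hts
    have := eq_one_of_two_pow_mul_eq_two_pow (s := t) ((hd d).mul_right (p ^ 2)).one_add
      (by rw [← h]; ring)
    have : 0 < 2 ^ (d + 1) * p ^ 2 := by positivity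
    omega
  · obtain ⟨r, rfl⟩ := hpodd
    have := eq_one_of_two_pow_mul_eq_two_pow (s := t + 1) (odd_two_mul_add_one (r * (r + 1)))
      (by rw [← h]; ring)
    nlinarith
  · obtain ⟨d, rfl⟩ := Nat.exists_eq_add_of_lt hst
    have := eq_one_of_two_pow_mul_eq_two_pow (s := s) ((hd d).add_odd (hpodd.pow (n := 2)))
      (by rw [← h]; ring)
    have := Nat.one_le_two_pow (n := d + 1)
    omega

lemma false_of_omit_p_and_two_pow_mul_p {k p b : ℕ} (hp : 0 < p) (hbk : b ≤ k)
    (h : 2 ^ (k + 1) * (1 + p) = 1 + p + p ^ 2 + p + 2 ^ b * p) : False := by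
  obtain ⟨m, hT, hm⟩ :=
    exists_eq_one_add_mul_of_mul_one_add_eq hp (R := 2 + p + 2 ^ b) (h.trans (by ring))
  have hle : 2 ^ (b + 1) ≤ 1 + p * m := hT ▸ Nat.pow_le_pow_right two_pos (by omega)
  rw [pow_succ] at hle
  have h2b := Nat.one_le_two_pow (n := b)
  have hm2 : 2 ≤ m := by nlinarith
  -- eliminating `2 ^ b` gives `m p + 2 m ≤ 2 p + 3`
  nlinarith

lemma false_of_omit_p_and_two_pow_mul_p_sq {k p b : ℕ} (hpodd : Odd p) (hp1 : 1 < p)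
    (h : 2 ^ (k + 1) * (1 + p) = 1 + p + p ^ 2 + p + 2 ^ b * p ^ 2) : False := by
  obtain ⟨m, hT, hm⟩ :=
    exists_eq_one_add_mul_of_mul_one_add_eq (by omega) (R := 2 + p + 2 ^ b * p) (h.trans (by ring))
  obtain ⟨m, rfl⟩ := Nat.exists_eq_add_one_of_ne_zero (show m ≠ 0 by rintro rfl; omega)
  have hm' : m * (p + 1) = 2 ^ b * p := by linarith
  have hdvd : p + 1 ∣ 2 ^ b :=
    (show Nat.Coprime (p + 1) p by simp).dvd_of_dvd_mul_right ⟨m, by linarith⟩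
  obtain ⟨t, htb, ht⟩ := (Nat.dvd_prime_pow Nat.prime_two).mp hdvd
  obtain ⟨s, rfl⟩ := Nat.exists_eq_add_of_le htb
  have hms : m = 2 ^ s * p := by
    refine Nat.eq_of_mul_eq_mul_left (show 0 < p + 1 by omega) ?_
    rw [mul_comm, hm', ht, pow_add, mul_assoc]
  refine two_pow_add_two_pow_mul_sq_ne_two_pow hpodd hp1 t s (k + 1) ?_
  rw [hT, ← ht, hms]
  ring

lemma eq_of_omit_p_sq_and_two_pow_mul_p {k p b : ℕ} (hp : 0 < p) (hbk : b ≤ k)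
    (h : 2 ^ (k + 1) * (1 + p) = 1 + p + p ^ 2 + p ^ 2 + 2 ^ b * p) :
    k = 3 ∧ b = 3 ∧ p = 5 := by
  obtain ⟨m, hT, hm⟩ :=
    exists_eq_one_add_mul_of_mul_one_add_eq hp (R := 1 + 2 * p + 2 ^ b) (h.trans (by ring))
  have hle : 2 ^ (b + 1) ≤ 2 ^ (k + 1) := Nat.pow_le_pow_right two_pos (by omega)
  have hmodd : Odd m := by
    have heven : Even (2 ^ (k + 1)) := Nat.even_pow.mpr ⟨even_two, k.succ_ne_zero⟩
    rw [hT, add_comm, Nat.even_add_one, Nat.not_even_iff_odd] at heven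
    exact (Nat.odd_mul.mp heven).2
  have hm3 : m = 3 := by
    rw [hT, pow_succ] at hle
    have h2b := Nat.one_le_two_pow (n := b)
    -- eliminating `2 ^ b` gives `m p + 2 m ≤ 4 p + 1`
    have hm5 : m < 5 := by nlinarith
    have hm1 : m ≠ 1 := by rintro rfl; omega
    have := Nat.odd_iff.mp hmodd
    omega
  subst hm3
  have h8 : 8 ≤ 2 ^ b := by rw [pow_succ] at hle; omega
  have hkb : k = b := by
    have : 2 ^ (k + 1) < 2 ^ (b + 2) := by rw [pow_succ, pow_succ]; omega
    have := (Nat.pow_lt_pow_iff_right one_lt_two).mp this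
    omega
  subst hkb
  have h8 : 2 ^ k = 2 ^ 3 := by rw [pow_succ] at hT; omega
  obtain rfl := Nat.pow_right_injective le_rfl h8
  omega

lemma false_of_omit_p_sq_and_two_pow_mul_p_sq {k p b : ℕ} (hpodd : Odd p) (hp1 : 1 < p)
    (hbk : b ≤ k) (h : 2 ^ (k + 1) * (1 + p) = 1 + p + p ^ 2 + p ^ 2 + 2 ^ b * p ^ 2) :
    False := by
  obtain ⟨m, hT, hm⟩ := exists_eq_one_add_mul_of_mul_one_add_eq (by omega)
    (R := 1 + 2 * p + 2 ^ b * p) (h.trans (by ring))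
  obtain ⟨c, rfl⟩ : p ∣ m :=
    (show Nat.Coprime p (1 + p) by simp).dvd_of_dvd_mul_right ⟨2 + 2 ^ b, by linarith⟩
  have hc : c * (1 + p) = 2 + 2 ^ b :=
    Nat.eq_of_mul_eq_mul_left (show 0 < p by omega) (by linarith)
  obtain ⟨r, rfl⟩ := hpodd
  have hr : 1 ≤ r := by omega
  have hc1 : 1 ≤ c := Nat.pos_of_ne_zero (by rintro rfl; omega)
  -- `1 + p ^ 2 c = (2 p - 1 + c) + 2 ^ b (p - 1)` because `p c = 2 + 2 ^ b - c`
  have hsplit : 2 ^ (k + 1) = (c + 4 * r + 1) + 2 ^ (b + 1) * r := by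
    rw [hT, pow_succ]; nlinarith
  have hdvd : 2 ^ (b + 1) ∣ c + 4 * r + 1 := by
    refine (Nat.dvd_add_left (Dvd.intro r rfl)).mp ?_
    rw [← hsplit]
    exact pow_dvd_pow 2 (by omega)
  have heq := Nat.eq_of_dvd_of_lt_two_mul (by omega) hdvd (by rw [pow_succ]; nlinarith)
  rw [pow_succ] at heq
  obtain rfl | hc2 := hc1.eq_or_lt
  · omega
  · nlinarith

theorem case_5_implies_n_eq_200_general
    (n k p b j g d₁ d₂ : ℕ) (hp : p.Prime) (hpodd : Odd p)
    (hn : n = 2 ^ k * p ^ 2)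
    (hσ : σ 1 n = 2 * n + d₁ + d₂)
    (hj : j = 1 ∨ j = 2) (hg : g = 1 ∨ g = 2) (hbk : b ≤ k)
    (hd₁eq : d₁ = p ^ j) (hd₂eq : d₂ = 2 ^ b * p ^ g) :
    n = 200 ∧ d₁ = 25 ∧ d₂ = 40 := by
  subst hn hd₁eq hd₂eq
  have key := two_pow_succ_mul_one_add_eq_of_sigma_eq hp hpodd hσ
  rcases hj with rfl | rfl <;> rcases hg with rfl | rfl
  · rw [pow_one] at key
    exact (false_of_omit_p_and_two_pow_mul_p hp.pos hbk key).elim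
  · rw [pow_one] at key
    exact (false_of_omit_p_and_two_pow_mul_p_sq hpodd hp.one_lt key).elim
  · rw [pow_one] at key
    obtain ⟨rfl, rfl, rfl⟩ := eq_of_omit_p_sq_and_two_pow_mul_p hp.pos hbk key
    norm_num
  · exact (false_of_omit_p_sq_and_two_pow_mul_p_sq hpodd hp.one_lt hbk key).elim

theorem case_5_implies_n_eq_200
    (n k p b j g d₁ d₂ : ℕ) (hk : 0 < k) (hp : p.Prime) (hpodd : Odd p)
    (hn : n = 2 ^ k * p ^ 2)
    (hd₁ : d₁ ∣ n) (hd₂ : d₂ ∣ n) (hd₁pos : 0 < d₁) (hd₂pos : 0 < d₂)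
    (hne : d₁ ≠ d₂) (hσ : σ 1 n = 2 * n + d₁ + d₂)
    (hj : j = 1 ∨ j = 2) (hg : g = 1 ∨ g = 2) (hb : 1 ≤ b) (hbk : b ≤ k)
    (hd₁eq : d₁ = p ^ j) (hd₂eq : d₂ = 2 ^ b * p ^ g) :
    n = 200 ∧ d₁ = 25 ∧ d₂ = 40 :=
  case_5_implies_n_eq_200_general n k p b j g d₁ d₂ hp hpodd hn hσ hj hg hbk hd₁eq hd₂eq
end

section
/- Let k, a, b be integers with 0 < a ≤ k and 0 < b ≤ k, and let p be a prime satisfying p · (1 + 2^b) = 2^(k+1) − 2^a − 1. Then n = 2^k · p is 2-near perfect with omitted divisors 2^a and 2^b · p, i.e. σ(n) = 2n + 2^a + 2^b · p. -/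
open ArithmeticFunction
open scoped ArithmeticFunction.sigma

/-! Since `a ≥ 1`, the odd number `2^(k+1) - 2^a - 1` is a multiple of `p`, so `p` is odd and
`σ(2^k p) = (2^(k+1) - 1)(p + 1)`. Expanding this as `2^(k+1) p + 2^(k+1) - (p + 1)` and
substituting `2^(k+1) = p (1 + 2^b) + 2^a + 1` in the second term leaves `2n + 2^a + 2^b p`. -/

namespace ArithmeticFunction

theorem sigma_one_two_pow (k : ℕ) : σ 1 (2 ^ k) = 2 ^ (k + 1) - 1 := by
  rw [sigma_one_apply_prime_pow Nat.prime_two, Nat.geomSum_eq le_rfl, Nat.div_one]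

theorem sigma_one_apply_prime {p : ℕ} (hp : p.Prime) : σ 1 p = p + 1 := by
  simpa [geom_sum_two] using sigma_one_apply_prime_pow (i := 1) hp

theorem sigma_one_two_pow_mul_of_odd (k : ℕ) {m : ℕ} (hm : Odd m) :
    σ 1 (2 ^ k * m) = (2 ^ (k + 1) - 1) * σ 1 m := by
  rw [isMultiplicative_sigma.map_mul_of_coprime ((Nat.coprime_two_left.2 hm).pow_left k),
    sigma_one_two_pow]

end ArithmeticFunction

theorem odd_two_pow_succ_sub_two_pow_sub_one {k a : ℕ} (ha : 0 < a)
    (h : 2 ^ (k + 1) - 2 ^ a - 1 ≠ 0) : Odd (2 ^ (k + 1) - 2 ^ a - 1) := by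
  have h2a : 2 ^ a = 2 * 2 ^ (a - 1) := by rw [← pow_succ', Nat.sub_add_cancel ha]
  exact ⟨2 ^ k - 2 ^ (a - 1) - 1, by omega⟩

theorem family_three_is_two_near_perfect_general
    (k a b p n : ℕ) (ha : 0 < a)
    (hpeq : p * (1 + 2 ^ b) = 2 ^ (k + 1) - 2 ^ a - 1) (hp : p.Prime)
    (hn : n = 2 ^ k * p) :
    σ 1 n = 2 * n + 2 ^ a + 2 ^ b * p := by
  have hpos : 0 < p * (1 + 2 ^ b) := Nat.mul_pos hp.pos (by positivity)
  have hodd : Odd p := by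
    have h := odd_two_pow_succ_sub_two_pow_sub_one ha (hpeq ▸ hpos).ne'
    rw [← hpeq] at h
    exact Nat.Odd.of_mul_left h
  have hpow : 2 ^ (k + 1) = p * (1 + 2 ^ b) + 2 ^ a + 1 := by omega
  have hdouble : 2 * (2 ^ k * p) = 2 ^ (k + 1) * p := by ring
  rw [hn, sigma_one_two_pow_mul_of_odd k hodd, sigma_one_apply_prime hp, hdouble, hpow,
    Nat.add_sub_cancel]
  ring

theorem family_three_is_two_near_perfect
    (k a b p n : ℕ) (ha : 0 < a) (hak : a ≤ k) (hb : 0 < b) (hbk : b ≤ k)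
    (hpeq : p * (1 + 2 ^ b) = 2 ^ (k + 1) - 2 ^ a - 1) (hp : p.Prime)
    (hn : n = 2 ^ k * p) :
    σ 1 n = 2 * n + 2 ^ a + 2 ^ b * p :=
  family_three_is_two_near_perfect_general k a b p n ha hpeq hp hn
end
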